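/- Let d ≥ 3 and θ > 0. Let 𝒬 be a family of cubes satisfying (G), and let ω : ℝ^d → ℝ be measurable with 0 < δ ≤ ω(x) ≤ 1 for all x and some δ > 0. Let a be an (ω,𝒬)-atom with supp a ⊆ K ⊆ Q** for some cube K and some Q ∈ 𝒬, ‖a‖_∞ ≤ |K|^{-1}, and ∫_K a(x) ω(x) dx = 0. Then a ∈ H¹_at(𝒜_𝒬) and ‖a‖_{H¹_at(𝒜_𝒬)} ≤ 1 + (|K|^{-1} + |Q|^{-1}) · |Q**|. -/

import Mathlib

open MeasureTheory Filter
open scoped ENNReal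

noncomputable section

/-- `ℝ^d` as a Euclidean space. -/
abbrev Rd (d : ℕ) := EuclideanSpace ℝ (Fin d)

/-- A cube in `ℝ^d`, given by its center and (positive) radius. -/
structure Cube (d : ℕ) where
  center : Rd d
  radius : ℝ
  radius_pos : 0 < radius

/-- The underlying open set of a cube: `Q(c,r) = {y : max_i |c_i - y_i| < r}`. -/
def Cube.carrier {d : ℕ} (Q : Cube d) : Set (Rd d) :=
  {y | ∀ i, |Q.center i - y i| < Q.radius}

/-- The diameter `d_Q = 2 √d · r_Q` of a cube. -/
def Cube.diam {d : ℕ} (Q : Cube d) : ℝ := 2 * Real.sqrt d * Q.radius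

/-- The `k`-fold enlargement `Q^{*k} = Q(c_Q, (1+θ)^k r_Q)` of a cube, as a set. -/
def Cube.starSet {d : ℕ} (Q : Cube d) (θ : ℝ) (k : ℕ) : Set (Rd d) :=
  {y | ∀ i, |Q.center i - y i| < (1 + θ) ^ k * Q.radius}

/-- The condition (G) on a family of cubes: it is countable, the closures cover `ℝ^d`,
distinct cubes overlap in measure zero, and cubes whose fourfold enlargements meet have
comparable diameters (with constant `CG`). -/
def SatG {d : ℕ} (θ CG : ℝ) (𝒬 : Set (Cube d)) : Prop :=
  𝒬.Countable ∧
  (⋃ Q ∈ 𝒬, closure Q.carrier) = Set.univ ∧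
  (∀ Q₁ ∈ 𝒬, ∀ Q₂ ∈ 𝒬, Q₁ ≠ Q₂ → volume (Q₁.carrier ∩ Q₂.carrier) = 0) ∧
  (∀ Q₁ ∈ 𝒬, ∀ Q₂ ∈ 𝒬, (Q₁.starSet θ 4 ∩ Q₂.starSet θ 4).Nonempty →
    CG⁻¹ * Q₁.diam ≤ Q₂.diam ∧ Q₂.diam ≤ CG * Q₁.diam)

/-- An `(ω,𝒬)`-atom: either a function supported in a cube `K ⊆ Q^{**}` (`Q ∈ 𝒬`) with
`‖a‖_∞ ≤ |K|⁻¹` and `∫_K a ω = 0`, or `a = |Q|⁻¹ χ_Q` for some `Q ∈ 𝒬`.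
Taking `ω ≡ 1` gives the notion of a `𝒬`-atom. -/
def IsWAtom {d : ℕ} (θ : ℝ) (𝒬 : Set (Cube d)) (ω : Rd d → ℝ) (a : Rd d → ℝ) : Prop :=
  Integrable a ∧
  ((∃ Q ∈ 𝒬, ∃ K : Cube d, K.carrier ⊆ Q.starSet θ 2 ∧
      Function.support a ⊆ K.carrier ∧
      (∀ᵐ x ∂volume, |a x| ≤ ((volume K.carrier).toReal)⁻¹) ∧
      ∫ x in K.carrier, a x * ω x = 0) ∨
    (∃ Q ∈ 𝒬, a = (Q.carrier).indicator (fun _ => ((volume Q.carrier).toReal)⁻¹)))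

/-- `f = ∑ λ_j a_j` is an atomic decomposition: all `a_j` are atoms (i.e. satisfy `𝒜`),
`∑ |λ_j| < ∞`, and the partial sums converge to `f` in `L¹`. -/
def IsDecomp {d : ℕ} (𝒜 : (Rd d → ℝ) → Prop) (f : Rd d → ℝ)
    (lam : ℕ → ℝ) (a : ℕ → Rd d → ℝ) : Prop :=
  (∀ j, 𝒜 (a j)) ∧ Summable (fun j => |lam j|) ∧
  Tendsto (fun N => ∫ x, |f x - ∑ j ∈ Finset.range N, lam j * a j x|) atTop (nhds 0)

/-- Membership in the atomic Hardy space `H¹_at(𝒜)`. -/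
def MemH1at {d : ℕ} (𝒜 : (Rd d → ℝ) → Prop) (f : Rd d → ℝ) : Prop :=
  ∃ lam a, IsDecomp 𝒜 f lam a

/-- The atomic norm `‖f‖_{H¹_at(𝒜)} = inf ∑ |λ_j|` over all atomic decompositions. -/
def H1atNorm {d : ℕ} (𝒜 : (Rd d → ℝ) → Prop) (f : Rd d → ℝ) : ℝ :=
  sInf {s | ∃ lam a, IsDecomp 𝒜 f lam a ∧ s = ∑' j, |lam j|}

theorem abs_integral_le_of_support_subset {α : Type*} [MeasurableSpace α] {μ : Measure α}
    {f : α → ℝ} {s : Set α} {M : ℝ} (hs : Function.support f ⊆ s) (hμs : μ s ≠ ⊤)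
    (hf : ∀ᵐ x ∂μ, |f x| ≤ M) : |∫ x, f x ∂μ| ≤ M * (μ s).toReal := by
  rw [← setIntegral_eq_integral_of_forall_compl_eq_zero fun x hx =>
    Function.notMem_support.mp fun h => hx (hs h), ← Real.norm_eq_abs]
  exact norm_setIntegral_le_of_norm_le_const_ae hμs.lt_top (ae_restrict_of_ae hf)

namespace Cube

variable {d : ℕ}

theorem carrier_eq_preimage_ball (Q : Cube d) :
    Q.carrier = WithLp.ofLp ⁻¹' Metric.ball (WithLp.ofLp Q.center) Q.radius := by
  ext y
  simp [carrier, ball_pi _ Q.radius_pos, Real.dist_eq, abs_sub_comm]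

theorem measurableSet_carrier (Q : Cube d) : MeasurableSet Q.carrier := by
  rw [carrier_eq_preimage_ball]
  exact measurableSet_ball.preimage (PiLp.volume_preserving_ofLp (Fin d)).measurable

theorem volume_carrier (Q : Cube d) :
    volume Q.carrier = ENNReal.ofReal ((2 * Q.radius) ^ d) := by
  rw [carrier_eq_preimage_ball, (PiLp.volume_preserving_ofLp (Fin d)).measure_preimage
    measurableSet_ball.nullMeasurableSet, Real.volume_pi_ball _ Q.radius_pos, Fintype.card_fin]

theorem volume_carrier_ne_top (Q : Cube d) : volume Q.carrier ≠ ⊤ := by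
  simp [volume_carrier]

theorem volume_carrier_toReal_pos (Q : Cube d) : 0 < (volume Q.carrier).toReal := by
  have := Q.radius_pos
  rw [volume_carrier, ENNReal.toReal_ofReal (by positivity)]
  positivity

def enlarge (Q : Cube d) {θ : ℝ} (hθ : 0 < 1 + θ) (k : ℕ) : Cube d :=
  ⟨Q.center, (1 + θ) ^ k * Q.radius, mul_pos (pow_pos hθ k) Q.radius_pos⟩

theorem carrier_enlarge (Q : Cube d) {θ : ℝ} (hθ : 0 < 1 + θ) (k : ℕ) :
    (Q.enlarge hθ k).carrier = Q.starSet θ k :=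
  rfl

theorem volume_starSet_toReal_pos (Q : Cube d) {θ : ℝ} (hθ : 0 < 1 + θ) (k : ℕ) :
    0 < (volume (Q.starSet θ k)).toReal :=
  (Q.enlarge hθ k).volume_carrier_toReal_pos

theorem carrier_subset_starSet (Q : Cube d) {θ : ℝ} (hθ : 0 ≤ θ) (k : ℕ) :
    Q.carrier ⊆ Q.starSet θ k := fun y hy i =>
  (hy i).trans_le (le_mul_of_one_le_left Q.radius_pos.le (one_le_pow₀ (by linarith)))

def normalizedIndicator (Q : Cube d) : Rd d → ℝ :=
  Q.carrier.indicator fun _ => ((volume Q.carrier).toReal)⁻¹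

theorem integrable_normalizedIndicator (Q : Cube d) : Integrable Q.normalizedIndicator :=
  (integrable_indicator_iff Q.measurableSet_carrier).mpr
    (integrableOn_const Q.volume_carrier_ne_top)

theorem integral_normalizedIndicator (Q : Cube d) : ∫ x, Q.normalizedIndicator x = 1 := by
  rw [normalizedIndicator, integral_indicator_const _ Q.measurableSet_carrier, smul_eq_mul,
    measureReal_def, mul_inv_cancel₀ Q.volume_carrier_toReal_pos.ne']

theorem abs_normalizedIndicator_le (Q : Cube d) (x : Rd d) :
    |Q.normalizedIndicator x| ≤ ((volume Q.carrier).toReal)⁻¹ := by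
  have := (inv_pos.mpr Q.volume_carrier_toReal_pos).le
  by_cases hx : x ∈ Q.carrier <;> simp [normalizedIndicator, hx, abs_of_nonneg this, this]

theorem support_normalizedIndicator_subset (Q : Cube d) :
    Function.support Q.normalizedIndicator ⊆ Q.carrier :=
  Set.support_indicator_subset

end Cube

section Atoms

variable {d : ℕ} {θ : ℝ} {𝒬 : Set (Cube d)}

theorem isWAtom_normalizedIndicator (ω : Rd d → ℝ) {Q : Cube d} (hQ : Q ∈ 𝒬) :
    IsWAtom θ 𝒬 ω Q.normalizedIndicator :=
  ⟨Q.integrable_normalizedIndicator, Or.inr ⟨Q, hQ, rfl⟩⟩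

theorem isWAtom_inv_mul_of_abs_le {ω b : Rd d → ℝ} {Q K : Cube d} {M : ℝ} (hQ : Q ∈ 𝒬)
    (hKQ : K.carrier ⊆ Q.starSet θ 2) (hb : Integrable b)
    (hsupp : Function.support b ⊆ K.carrier) (hM : 0 < M) (hbound : ∀ᵐ x, |b x| ≤ M)
    (hcancel : ∫ x, b x * ω x = 0) :
    IsWAtom θ 𝒬 ω (fun x => (M * (volume K.carrier).toReal)⁻¹ * b x) := by
  have hK := K.volume_carrier_toReal_pos
  refine ⟨hb.const_mul _, Or.inl ⟨Q, hQ, K, hKQ, ?_, ?_, ?_⟩⟩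
  · exact (Function.support_mul_subset_right _ _).trans hsupp
  · filter_upwards [hbound] with x hx
    rw [abs_mul, abs_of_pos (by positivity), mul_inv, mul_right_comm]
    exact mul_le_of_le_one_left (by positivity) (inv_mul_le_one_of_le₀ hx hM.le)
  · have hbω : ∀ x ∉ K.carrier, b x * ω x = 0 := fun x hx => by
      rw [Function.notMem_support.mp (fun h => hx (hsupp h)), zero_mul]
    simp_rw [mul_assoc]
    rw [integral_const_mul, setIntegral_eq_integral_of_forall_compl_eq_zero hbω, hcancel,
      mul_zero]

end Atoms

section Decompositions

variable {d : ℕ} {𝒜 : (Rd d → ℝ) → Prop} {f : Rd d → ℝ}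

theorem isDecomp_of_eq_sum_range {lam : ℕ → ℝ} {a : ℕ → Rd d → ℝ} {n : ℕ}
    (ha : ∀ j, 𝒜 (a j)) (hlam : ∀ j ∉ Finset.range n, lam j = 0)
    (hf : ∀ x, f x = ∑ j ∈ Finset.range n, lam j * a j x) : IsDecomp 𝒜 f lam a := by
  refine ⟨ha, summable_of_ne_finset_zero (s := Finset.range n) fun j hj => ?_, ?_⟩
  · rw [hlam j hj, abs_zero]
  · refine tendsto_const_nhds.congr' ((eventually_ge_atTop n).mono fun N hN => ?_)
    have hsum (x) : f x = ∑ j ∈ Finset.range N, lam j * a j x := by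
      rw [hf, Finset.sum_subset (Finset.range_subset_range.mpr hN) fun j _ hj => by
        rw [hlam j hj, zero_mul]]
    simp [hsum]

theorem h1atNorm_le_tsum {lam : ℕ → ℝ} {a : ℕ → Rd d → ℝ}
    (h : IsDecomp 𝒜 f lam a) : H1atNorm 𝒜 f ≤ ∑' j, |lam j| :=
  csInf_le ⟨0, by rintro s ⟨lam', a', -, rfl⟩; exact tsum_nonneg fun j => abs_nonneg _⟩
    ⟨lam, a, h, rfl⟩

theorem memH1at_and_h1atNorm_le_of_eq_add {a₀ a₁ : Rd d → ℝ} {c₀ c₁ : ℝ} (h₀ : 𝒜 a₀)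
    (h₁ : 𝒜 a₁) (hf : ∀ x, f x = c₀ * a₀ x + c₁ * a₁ x) :
    MemH1at 𝒜 f ∧ H1atNorm 𝒜 f ≤ |c₀| + |c₁| := by
  set lam : ℕ → ℝ := fun j => if j = 0 then c₀ else if j = 1 then c₁ else 0
  have hlam : ∀ j ∉ Finset.range 2, lam j = 0 := fun j hj => by
    rw [Finset.mem_range, not_lt] at hj
    simp only [lam, if_neg (show j ≠ 0 by omega), if_neg (show j ≠ 1 by omega)]
  have h : IsDecomp 𝒜 f lam fun j => if j = 0 then a₀ else a₁ :=
    isDecomp_of_eq_sum_range (fun j => by split_ifs <;> assumption) hlam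
      (fun x => by simp [Finset.sum_range_succ, lam, hf])
  refine ⟨⟨_, _, h⟩, (h1atNorm_le_tsum h).trans_eq ?_⟩
  rw [tsum_eq_sum (s := Finset.range 2) fun j hj => by rw [hlam j hj, abs_zero]]
  simp [Finset.sum_range_succ, lam]

end Decompositions

section MeanCorrection

variable {d : ℕ} {θ : ℝ} {𝒬 : Set (Cube d)} {a : Rd d → ℝ} {Q K : Cube d}

theorem abs_integral_le_one (hsupp : Function.support a ⊆ K.carrier)
    (hbound : ∀ᵐ x, |a x| ≤ ((volume K.carrier).toReal)⁻¹) : |∫ x, a x| ≤ 1 := by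
  simpa [inv_mul_cancel₀ K.volume_carrier_toReal_pos.ne'] using
    abs_integral_le_of_support_subset hsupp K.volume_carrier_ne_top hbound

/-- Subtracting `(∫ a) |Q|⁻¹ χ_Q` leaves a bounded function of mean zero supported in `Q**`. -/
theorem isWAtom_sub_integral_mul_normalizedIndicator (hθ : 0 < θ) (hQ : Q ∈ 𝒬)
    (haint : Integrable a) (hKQ : K.carrier ⊆ Q.starSet θ 2)
    (hsupp : Function.support a ⊆ K.carrier)
    (hbound : ∀ᵐ x, |a x| ≤ ((volume K.carrier).toReal)⁻¹) :
    IsWAtom θ 𝒬 (fun _ => 1) fun x =>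
      ((((volume K.carrier).toReal)⁻¹ + ((volume Q.carrier).toReal)⁻¹) *
        (volume (Q.starSet θ 2)).toReal)⁻¹ * (a x - (∫ y, a y) * Q.normalizedIndicator x) := by
  have hI := abs_integral_le_one hsupp hbound
  have hg := Q.integrable_normalizedIndicator.const_mul (∫ y, a y)
  set b := fun x => a x - (∫ y, a y) * Q.normalizedIndicator x
  have hb_supp : Function.support b ⊆ Q.starSet θ 2 :=
    (Function.support_sub _ _).trans (Set.union_subset (hsupp.trans hKQ)
      ((Function.support_mul_subset_right _ _).trans
        (Q.support_normalizedIndicator_subset.trans (Q.carrier_subset_starSet hθ.le 2))))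
  have hb_bound : ∀ᵐ x, |b x| ≤ ((volume K.carrier).toReal)⁻¹ + ((volume Q.carrier).toReal)⁻¹ :=
    hbound.mono fun x hx => (abs_sub _ _).trans (add_le_add hx (by
      rw [abs_mul]
      exact (mul_le_of_le_one_left (abs_nonneg _) hI).trans (Q.abs_normalizedIndicator_le x)))
  have hb_mean : ∫ x, b x * 1 = 0 := by
    simp_rw [mul_one, b]
    rw [integral_sub haint hg, integral_const_mul, Q.integral_normalizedIndicator, mul_one,
      sub_self]
  have := K.volume_carrier_toReal_pos
  have := Q.volume_carrier_toReal_pos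
  exact isWAtom_inv_mul_of_abs_le (K := Q.enlarge (by linarith) 2) hQ subset_rfl
    (haint.sub hg) hb_supp (by positivity) hb_bound hb_mean

end MeanCorrection

theorem statement7_general (d : ℕ) (θ : ℝ) (hθ : 0 < θ)
    (𝒬 : Set (Cube d))
    (a : Rd d → ℝ) (haint : Integrable a)
    (Q : Cube d) (hQ : Q ∈ 𝒬) (K : Cube d)
    (hKQ : K.carrier ⊆ Q.starSet θ 2)
    (hsupp : Function.support a ⊆ K.carrier)
    (hbound : ∀ᵐ x ∂volume, |a x| ≤ ((volume K.carrier).toReal)⁻¹) :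
    MemH1at (IsWAtom θ 𝒬 (fun _ => 1)) a ∧
    H1atNorm (IsWAtom θ 𝒬 (fun _ => 1)) a ≤
      1 + (((volume K.carrier).toReal)⁻¹ + ((volume Q.carrier).toReal)⁻¹) *
        (volume (Q.starSet θ 2)).toReal := by
  have := K.volume_carrier_toReal_pos
  have := Q.volume_carrier_toReal_pos
  have := Q.volume_starSet_toReal_pos (by linarith : 0 < 1 + θ) 2
  set Λ := (((volume K.carrier).toReal)⁻¹ + ((volume Q.carrier).toReal)⁻¹) *
    (volume (Q.starSet θ 2)).toReal
  have hΛ : 0 < Λ := by positivity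
  obtain ⟨hmem, hnorm⟩ := memH1at_and_h1atNorm_le_of_eq_add (f := a) (c₀ := Λ)
    (c₁ := ∫ y, a y)
    (isWAtom_sub_integral_mul_normalizedIndicator hθ hQ haint hKQ hsupp hbound)
    (isWAtom_normalizedIndicator _ hQ) fun x => by rw [mul_inv_cancel_left₀ hΛ.ne']; ring
  rw [abs_of_pos hΛ] at hnorm
  exact ⟨hmem, by linarith [abs_integral_le_one hsupp hbound]⟩

/-- an `(ω,𝒬)`-atom `a` with cancellation, supported in a cube `K ⊆ Q^{**}`,
belongs to `H¹_at(𝒜_𝒬)` with `‖a‖ ≤ 1 + (|K|⁻¹ + |Q|⁻¹)·|Q^{**}|`. -/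
theorem statement7 (d : ℕ) (hd : 3 ≤ d) (θ : ℝ) (hθ : 0 < θ) (CG : ℝ) (hCG : 1 ≤ CG)
    (𝒬 : Set (Cube d)) (hG : SatG θ CG 𝒬)
    (ω : Rd d → ℝ) (hωmeas : Measurable ω)
    (δ : ℝ) (hδ : 0 < δ) (hω : ∀ x, δ ≤ ω x ∧ ω x ≤ 1)
    (a : Rd d → ℝ) (haint : Integrable a)
    (Q : Cube d) (hQ : Q ∈ 𝒬) (K : Cube d)
    (hKQ : K.carrier ⊆ Q.starSet θ 2)
    (hsupp : Function.support a ⊆ K.carrier)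
    (hbound : ∀ᵐ x ∂volume, |a x| ≤ ((volume K.carrier).toReal)⁻¹)
    (hcancel : ∫ x in K.carrier, a x * ω x = 0) :
    MemH1at (IsWAtom θ 𝒬 (fun _ => 1)) a ∧
    H1atNorm (IsWAtom θ 𝒬 (fun _ => 1)) a ≤
      1 + (((volume K.carrier).toReal)⁻¹ + ((volume Q.carrier).toReal)⁻¹) *
        (volume (Q.starSet θ 2)).toReal :=
  statement7_general d θ hθ 𝒬 a haint Q hQ K hKQ hsupp hbound
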